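/- arXiv:2204.06042 — 5 statements merged into one kernel-verified Lean document; each statement's English description precedes it below -/
import Mathlib

section
/- Let H > 0, let x : [0,∞) → [0,∞) be right-continuous with left limits, let A : [0,∞) → [0,∞) be non-decreasing, right-continuous with A(0) = 0, and let η : [0,∞) → [0,∞) be non-decreasing with η(u) > 0 for u > 0. Define G(v) = ∫_c^v du/η(u) for some c > 0. If x(t) ≤ ∫_{(0,t]} η(x(s⁻)) dA(s) + H for all t ∈ [0,T], and G(H) + A(T) lies in the range of G, then x(t) ≤ G⁻¹(G(H) + A(t)) for all t ∈ [0,T]. -/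
open MeasureTheory Set Function Filter Topology ENNReal

section Aux


lemma aux_tn_tendsto (s : ℝ) :
    Tendsto (fun n : ℕ => ((⌊s * (n+1)⌋ : ℝ) + 1) / (n+1)) atTop (𝓝 s) := by
  have h1 : ∀ n : ℕ, s < ((⌊s * (n+1)⌋ : ℝ) + 1) / (n+1) := by
    intro n
    rw [lt_div_iff₀ (by positivity)]
    have := Int.lt_floor_add_one (s * (n+1))
    linarith
  have h2 : ∀ n : ℕ, ((⌊s * (n+1)⌋ : ℝ) + 1) / (n+1) ≤ s + 1/(n+1) := by
    intro n
    rw [div_le_iff₀ (by positivity)]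
    have := Int.floor_le (s * (n+1))
    have hn : (0:ℝ) < n+1 := by positivity
    field_simp
    nlinarith
  have h3 : Tendsto (fun n : ℕ => s + 1/(n+1 : ℝ)) atTop (𝓝 s) := by
    have := tendsto_one_div_add_atTop_nhds_zero_nat (𝕜 := ℝ)
    simpa using tendsto_const_nhds.add this
  exact tendsto_of_tendsto_of_tendsto_of_le_of_le tendsto_const_nhds h3
    (fun n => (h1 n).le) h2

lemma aux_meas_rc (x : ℝ → ℝ)
    (hx_rc : ∀ t ∈ Ici (0:ℝ), ContinuousWithinAt x (Ici t) t) :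
    Measurable (fun s : ℝ => x (max s 0)) := by
  have hmeas : ∀ n : ℕ, Measurable (fun s : ℝ =>
      x (max (((⌊s * (n+1)⌋ : ℝ) + 1) / (n+1)) 0)) := by
    intro n
    have h1 : Measurable fun s : ℝ => (⌊s * (n+1)⌋ : ℤ) :=
      Int.measurable_floor.comp (measurable_id.mul_const _)
    exact (measurable_of_countable (fun k : ℤ => x (max (((k:ℝ) + 1) / (n+1)) 0))).comp h1
  apply measurable_of_tendsto_metrizable hmeas
  rw [tendsto_pi_nhds]
  intro s
  set a := max s 0 with ha
  have hrc := hx_rc a (mem_Ici.mpr (le_max_right _ _))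
  have htend : Tendsto (fun n : ℕ => max (((⌊s * (n+1)⌋ : ℝ) + 1) / (n+1)) 0) atTop
      (𝓝[Ici a] a) := by
    rw [tendsto_nhdsWithin_iff]
    constructor
    · exact (continuous_max.comp (Continuous.prodMk continuous_id continuous_const)).tendsto s
        |>.comp (aux_tn_tendsto s) |>.congr (fun n => rfl)
    · filter_upwards with n
      exact max_le_max (by
        have := (by
          have h1 : s < ((⌊s * (n+1)⌋ : ℝ) + 1) / (n+1) := by
            rw [lt_div_iff₀ (by positivity)]
            have := Int.lt_floor_add_one (s * (n+1))
            linarith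
          exact h1.le : s ≤ ((⌊s * (n+1)⌋ : ℝ) + 1) / (n+1))
        exact this) le_rfl
  exact hrc.tendsto.comp htend

lemma aux_leftLim_tendsto (x : ℝ → ℝ)
    (hx_ll : ∀ t ∈ Ioi (0:ℝ), ∃ l : ℝ, Tendsto x (nhdsWithin t (Iio t)) (nhds l)) (s : ℝ) :
    Tendsto (fun r : ℝ => x (max r 0)) (𝓝[<] s) (𝓝 (leftLim (fun r : ℝ => x (max r 0)) s)) := by
  rcases le_or_gt s 0 with hs | hs
  · have hconst : ∀ᶠ r in 𝓝[<] s, x (max r 0) = x 0 := by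
      filter_upwards [self_mem_nhdsWithin] with r hr
      rw [max_eq_right (le_of_lt (lt_of_lt_of_le hr hs))]
    have htend : Tendsto (fun r : ℝ => x (max r 0)) (𝓝[<] s) (𝓝 (x 0)) :=
      Tendsto.congr' (EventuallyEq.symm hconst) tendsto_const_nhds
    rwa [leftLim_eq_of_tendsto htend]
  · obtain ⟨l, hl⟩ := hx_ll s hs
    have hmem : Ioi (0:ℝ) ∈ 𝓝[<] s := nhdsWithin_le_nhds (Ioi_mem_nhds hs)
    have heq : ∀ᶠ r in 𝓝[<] s, x (max r 0) = x r := by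
      filter_upwards [hmem] with r hr
      rw [max_eq_left (le_of_lt hr)]
    have htend : Tendsto (fun r : ℝ => x (max r 0)) (𝓝[<] s) (𝓝 l) :=
      Tendsto.congr' (EventuallyEq.symm heq) hl
    rwa [leftLim_eq_of_tendsto htend]

lemma aux_meas_leftLim (x : ℝ → ℝ)
    (hx_rc : ∀ t ∈ Ici (0:ℝ), ContinuousWithinAt x (Ici t) t)
    (hx_ll : ∀ t ∈ Ioi (0:ℝ), ∃ l : ℝ, Tendsto x (nhdsWithin t (Iio t)) (nhds l)) :
    Measurable (leftLim (fun s : ℝ => x (max s 0))) := by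
  have hx' : Measurable (fun s : ℝ => x (max s 0)) := aux_meas_rc x hx_rc
  have hmeas : ∀ n : ℕ, Measurable (fun s : ℝ => x (max (s - 1/(n+1)) 0)) := by
    intro n
    exact hx'.comp (measurable_id.sub_const _)
  apply measurable_of_tendsto_metrizable hmeas
  rw [tendsto_pi_nhds]
  intro s
  have h1 : Tendsto (fun n : ℕ => s - 1/(n+1 : ℝ)) atTop (𝓝[<] s) := by
    rw [tendsto_nhdsWithin_iff]
    refine ⟨?_, ?_⟩
    · have := tendsto_one_div_add_atTop_nhds_zero_nat (𝕜 := ℝ)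
      simpa using tendsto_const_nhds.sub this
    · filter_upwards with n
      simp only [mem_Iio, sub_lt_self_iff]
      positivity
  exact (aux_leftLim_tendsto x hx_ll s).comp h1

lemma aux_bound (T : ℝ) (x : ℝ → ℝ)
    (hx_rc : ∀ t ∈ Ici (0:ℝ), ContinuousWithinAt x (Ici t) t)
    (hx_ll : ∀ t ∈ Ioi (0:ℝ), ∃ l : ℝ, Tendsto x (nhdsWithin t (Iio t)) (nhds l)) :
    ∃ M : ℝ, 0 ≤ M ∧ ∀ s ∈ Icc (0:ℝ) T, x s ≤ M := by
  have key : ∀ t ∈ Icc (0:ℝ) T, ∃ M : ℝ, {s | s ∈ Icc (0:ℝ) T → x s ≤ M} ∈ 𝓝 t := by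
    intro t ht
    have hright : ∀ᶠ s in 𝓝[≥] t, x s ≤ x t + 1 := by
      have := (hx_rc t ht.1).tendsto
      have h2 : Iio (x t + 1) ∈ 𝓝 (x t) := Iio_mem_nhds (by linarith)
      filter_upwards [this h2] with s hs using hs.le
    rcases eq_or_lt_of_le ht.1 with h0 | h0
    · refine ⟨x t + 1, ?_⟩
      rw [← nhdsLT_sup_nhdsGE t, mem_sup]
      constructor
      · filter_upwards [self_mem_nhdsWithin] with s hs hsIcc
        exact absurd hsIcc.1 (by rw [← h0] at hs; exact not_le.mpr hs)
      · filter_upwards [hright] with s hs _ using hs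
    · obtain ⟨l, hl⟩ := hx_ll t h0
      refine ⟨max (x t + 1) (l + 1), ?_⟩
      rw [← nhdsLT_sup_nhdsGE t, mem_sup]
      constructor
      · have h2 : Iio (l + 1) ∈ 𝓝 l := Iio_mem_nhds (by linarith)
        filter_upwards [hl h2] with s hs _
        exact le_max_of_le_right hs.le
      · filter_upwards [hright] with s hs _ using le_max_of_le_left hs
  choose! M hM using key
  obtain ⟨t, htK, hcover⟩ := (isCompact_Icc (a := (0:ℝ)) (b := T)).elim_nhds_subcover
    (fun t => {s | s ∈ Icc (0:ℝ) T → x s ≤ M t}) hM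
  rcases t.eq_empty_or_nonempty with rfl | hne
  · refine ⟨0, le_rfl, fun s hs => absurd (hcover hs) (by simp)⟩
  · refine ⟨max (t.sup' hne M) 0, le_max_right _ _, fun s hs => ?_⟩
    obtain ⟨i, hi, his⟩ := mem_iUnion₂.mp (hcover hs)
    exact le_max_of_le_left (le_trans (his hs) (Finset.le_sup' M hi))

end Aux

/-- Deterministic Bihari–LaSalle inequality with càdlàg integrator. -/
theorem stmt_0 (H c T : ℝ) (hH : 0 < H) (hc : 0 < c) (hT : 0 < T)
    (x : ℝ → ℝ) (hx_nonneg : ∀ t, 0 ≤ x t)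
    (hx_rc : ∀ t ∈ Ici (0:ℝ), ContinuousWithinAt x (Ici t) t)
    (hx_ll : ∀ t ∈ Ioi (0:ℝ), ∃ l : ℝ, Tendsto x (nhdsWithin t (Iio t)) (nhds l))
    (A : StieltjesFunction ℝ) (hA0 : A 0 = 0) (hA_nonneg : ∀ t, 0 ≤ A t)
    (η : ℝ → ℝ) (hη_mono : MonotoneOn η (Ici 0)) (hη_nonneg : ∀ u, 0 ≤ η u)
    (hη_pos : ∀ u, 0 < u → 0 < η u)
    (hineq : ∀ t ∈ Icc (0:ℝ) T,
      x t ≤ (∫ s in Ioc (0:ℝ) t, η (leftLim x s) ∂A.measure) + H)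
    (hrange : ∃ w > (0:ℝ), (∫ u in c..w, (η u)⁻¹) = (∫ u in c..H, (η u)⁻¹) + A T) :
    ∀ t ∈ Icc (0:ℝ) T, ∀ w > (0:ℝ),
      (∫ u in c..w, (η u)⁻¹) = (∫ u in c..H, (η u)⁻¹) + A t → x t ≤ w := by
  classical
  clear hrange
  -- modified versions of x and η
  set x' : ℝ → ℝ := fun s => x (max s 0) with hx'def
  have hx'_meas : Measurable x' := aux_meas_rc x hx_rc
  set L : ℝ → ℝ := leftLim x' with hLdef
  have hL_meas : Measurable L := aux_meas_leftLim x hx_rc hx_ll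
  have hL_tendsto : ∀ s, Tendsto x' (𝓝[<] s) (𝓝 (L s)) := aux_leftLim_tendsto x hx_ll
  have hL_nonneg : ∀ s, 0 ≤ L s := fun s =>
    ge_of_tendsto (hL_tendsto s) (by filter_upwards with r using hx_nonneg _)
  obtain ⟨M, hM0, hM⟩ := aux_bound T x hx_rc hx_ll
  have hL_le_M : ∀ s ∈ Ioc (0:ℝ) T, L s ≤ M := by
    intro s hs
    refine le_of_tendsto (hL_tendsto s) ?_
    have hmem : Ioo (0:ℝ) s ∈ 𝓝[<] s := Ioo_mem_nhdsLT_of_mem ⟨hs.1, le_rfl⟩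
    filter_upwards [hmem] with r hr
    have hr' : r ∈ Icc (0:ℝ) T := ⟨hr.1.le, hr.2.le.trans hs.2⟩
    have : x' r = x r := by simp [hx'def, max_eq_left hr.1.le]
    rw [this]; exact hM r hr'
  have hLx : ∀ s ∈ Ioc (0:ℝ) T, leftLim x s = L s := by
    intro s hs
    obtain ⟨l, hl⟩ := hx_ll s hs.1
    have h1 : leftLim x s = l := leftLim_eq_of_tendsto hl
    have h2 : L s = l := by
      have heq : ∀ᶠ r in 𝓝[<] s, x' r = x r := by
        filter_upwards [nhdsWithin_le_nhds (Ioi_mem_nhds hs.1)] with r hr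
        simp [hx'def, max_eq_left (le_of_lt (mem_Ioi.mp hr))]
      exact tendsto_nhds_unique (hL_tendsto s) (hl.congr' (heq.mono fun _ h => h.symm))
    rw [h1, h2]
  set η' : ℝ → ℝ := fun u => η (max u 0) with hη'def
  have hη'_mono : Monotone η' := fun u v huv =>
    hη_mono (le_max_right u 0) (le_max_right v 0) (max_le_max huv le_rfl)
  have hη'_meas : Measurable η' := hη'_mono.measurable
  have hη'_eq : ∀ u, 0 ≤ u → η' u = η u := fun u hu => by simp [hη'def, max_eq_left hu]
  have hη'_pos : ∀ u, 0 < u → 0 < η' u := fun u hu => by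
    rw [hη'_eq u hu.le]; exact hη_pos u hu
  have hη'_nonneg : ∀ u, 0 ≤ η' u := fun u => hη_nonneg _
  -- the density and the measure ν
  set D : ℝ → ℝ≥0∞ := fun s => ENNReal.ofReal (η' (L s)) with hDdef
  have hD_meas : Measurable D := ENNReal.measurable_ofReal.comp (hη'_meas.comp hL_meas)
  set ν : Measure ℝ := (A.measure.restrict (Ioc 0 T)).withDensity D with hνdef
  have hν_fin : IsFiniteMeasure ν := by
    constructor
    have h1 : ν univ = ∫⁻ s in Ioc (0:ℝ) T, D s ∂A.measure := by
      rw [hνdef, withDensity_apply _ MeasurableSet.univ, Measure.restrict_restrict MeasurableSet.univ,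
        univ_inter]
    rw [h1]
    calc ∫⁻ s in Ioc (0:ℝ) T, D s ∂A.measure
        ≤ ∫⁻ _ in Ioc (0:ℝ) T, ENNReal.ofReal (η' M) ∂A.measure := by
          refine setLIntegral_mono measurable_const fun s hs => ?_
          exact ENNReal.ofReal_le_ofReal (hη'_mono (hL_le_M s hs))
      _ = ENNReal.ofReal (η' M) * A.measure (Ioc 0 T) := setLIntegral_const _ _
      _ < ⊤ := by
          rw [A.measure_Ioc]
          exact ENNReal.mul_lt_top ENNReal.ofReal_lt_top ENNReal.ofReal_lt_top
  have hν_ne : ∀ S : Set ℝ, ν S ≠ ⊤ := fun S => measure_ne_top ν S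
  -- the function z and its left version
  set z : ℝ → ℝ := fun s => H + (ν (Ioc 0 s)).toReal with hzdef
  set zl : ℝ → ℝ := fun s => H + (ν (Ioo 0 s)).toReal with hzldef
  have hz_mono : Monotone z := by
    intro a b hab
    exact add_le_add_right (ENNReal.toReal_mono (hν_ne _)
      (measure_mono (Ioc_subset_Ioc_right hab))) H
  have hzl_mono : Monotone zl := by
    intro a b hab
    exact add_le_add_right (ENNReal.toReal_mono (hν_ne _)
      (measure_mono (Ioo_subset_Ioo_right hab))) H
  have hz_H : ∀ s, H ≤ z s := fun s => le_add_of_nonneg_right ENNReal.toReal_nonneg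
  have hzl_H : ∀ s, H ≤ zl s := fun s => le_add_of_nonneg_right ENNReal.toReal_nonneg
  have hz_nonpos : ∀ s : ℝ, s ≤ 0 → z s = H := by
    intro s hs
    rw [hzdef]
    simp [Ioc_eq_empty (fun h : (0:ℝ) < s => absurd hs (not_le.mpr h))]
  have hzl_le_z : ∀ s, zl s ≤ z s := fun s =>
    add_le_add_right (ENNReal.toReal_mono (hν_ne _) (measure_mono Ioo_subset_Ioc_self)) H
  have hz_le_zl : ∀ r s : ℝ, r < s → z r ≤ zl s := by
    intro r s hrs
    exact add_le_add_right (ENNReal.toReal_mono (hν_ne _)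
      (measure_mono (show Ioc (0:ℝ) r ⊆ Ioo (0:ℝ) s from
        fun u hu => ⟨hu.1, lt_of_le_of_lt hu.2 hrs⟩))) H
  -- x ≤ z on [0, T]
  have hxz : ∀ s ∈ Icc (0:ℝ) T, x s ≤ z s := by
    intro s hs
    have hIcc : Ioc (0:ℝ) s ⊆ Ioc (0:ℝ) T := Ioc_subset_Ioc_right hs.2
    have hcongr : ∫ r in Ioc (0:ℝ) s, η (leftLim x r) ∂A.measure
        = ∫ r in Ioc (0:ℝ) s, η' (L r) ∂A.measure := by
      refine setIntegral_congr_fun measurableSet_Ioc fun r hr => ?_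
      rw [hLx r (hIcc hr), hη'_eq _ (hL_nonneg r)]
    have hlint : ∫ r in Ioc (0:ℝ) s, η' (L r) ∂A.measure = (ν (Ioc (0:ℝ) s)).toReal := by
      rw [integral_eq_lintegral_of_nonneg_ae (Eventually.of_forall fun r => hη'_nonneg (L r))
        ((hη'_meas.comp hL_meas).aestronglyMeasurable)]
      congr 1
      rw [hνdef, withDensity_apply _ measurableSet_Ioc,
        Measure.restrict_restrict measurableSet_Ioc, inter_eq_left.mpr hIcc]
    have hs' := hineq s hs
    rw [hcongr, hlint] at hs'
    have hz : z s = H + (ν (Ioc 0 s)).toReal := rfl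
    linarith
  -- right continuity of z (quantitative)
  have hz_rc : ∀ s : ℝ, ∀ ε : ℝ, 0 < ε → ∃ δ : ℝ, 0 < δ ∧ z (s + δ) < z s + ε := by
    intro s ε hε
    have hanti : Antitone (fun n : ℕ => Ioc (0:ℝ) (s + 1/(n+1))) := by
      intro m n hmn
      apply Ioc_subset_Ioc_right
      have h1 : ((m:ℝ)+1) ≤ (n:ℝ)+1 := by exact_mod_cast Nat.succ_le_succ hmn
      have := one_div_le_one_div_of_le (by positivity : (0:ℝ) < (m:ℝ)+1) h1
      linarith
    have hiInter : ⋂ n : ℕ, Ioc (0:ℝ) (s + 1/(n+1)) = Ioc 0 s := by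
      ext u
      simp only [mem_iInter, mem_Ioc]
      constructor
      · intro h
        refine ⟨(h 0).1, ?_⟩
        by_contra hus
        push_neg at hus
        obtain ⟨n, hn⟩ := exists_nat_one_div_lt (sub_pos.mpr hus)
        have := (h n).2
        linarith
      · rintro ⟨h1, h2⟩ n
        have : (0:ℝ) < 1/(n+1) := by positivity
        exact ⟨h1, by linarith⟩
    have htend := tendsto_measure_iInter_atTop (μ := ν)
      (fun n => measurableSet_Ioc.nullMeasurableSet) hanti ⟨0, hν_ne _⟩
    rw [hiInter] at htend
    have htoReal : Tendsto (fun n : ℕ => (ν (Ioc 0 (s + 1/(n+1)))).toReal) atTop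
        (𝓝 ((ν (Ioc 0 s)).toReal)) := (ENNReal.tendsto_toReal (hν_ne _)).comp htend
    have hev : ∀ᶠ n : ℕ in atTop,
        (ν (Ioc 0 (s + 1/(n+1)))).toReal < (ν (Ioc 0 s)).toReal + ε :=
      htoReal.eventually_lt_const (by linarith)
    obtain ⟨n, hn⟩ := hev.exists
    refine ⟨1/(n+1), by positivity, ?_⟩
    have hz1 : z (s + 1/(n+1)) = H + (ν (Ioc 0 (s + 1/(n+1)))).toReal := rfl
    have hz2 : z s = H + (ν (Ioc 0 s)).toReal := rfl
    rw [hz1, hz2]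
    linarith
  -- left approximation of zl
  have hzl_lim : ∀ s : ℝ, Tendsto (fun n : ℕ => z (s - 1/(n+1))) atTop (𝓝 (zl s)) := by
    intro s
    have hmono : Monotone (fun n : ℕ => Ioc (0:ℝ) (s - 1/(n+1))) := by
      intro m n hmn
      apply Ioc_subset_Ioc_right
      have h1 : ((m:ℝ)+1) ≤ (n:ℝ)+1 := by exact_mod_cast Nat.succ_le_succ hmn
      have := one_div_le_one_div_of_le (by positivity : (0:ℝ) < (m:ℝ)+1) h1
      linarith
    have hiUnion : ⋃ n : ℕ, Ioc (0:ℝ) (s - 1/(n+1)) = Ioo 0 s := by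
      ext u
      simp only [mem_iUnion, mem_Ioc, mem_Ioo]
      constructor
      · rintro ⟨n, h1, h2⟩
        have : (0:ℝ) < 1/(n+1) := by positivity
        exact ⟨h1, by linarith⟩
      · rintro ⟨h1, h2⟩
        obtain ⟨n, hn⟩ := exists_nat_one_div_lt (sub_pos.mpr h2)
        exact ⟨n, h1, by linarith⟩
    have htend := tendsto_measure_iUnion_atTop (μ := ν) hmono
    rw [hiUnion] at htend
    have htoReal : Tendsto (fun n : ℕ => (ν (Ioc 0 (s - 1/(n+1)))).toReal) atTop
        (𝓝 ((ν (Ioo 0 s)).toReal)) := (ENNReal.tendsto_toReal (hν_ne _)).comp htend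
    exact tendsto_const_nhds.add htoReal
  -- left limits compare
  have hxl_le_zl : ∀ s ∈ Ioc (0:ℝ) T, L s ≤ zl s := by
    intro s hs
    refine le_of_tendsto (hL_tendsto s) ?_
    filter_upwards [Ioo_mem_nhdsLT_of_mem (⟨hs.1, le_rfl⟩ : s ∈ Ioc 0 s)] with r hr
    have hr' : r ∈ Icc (0:ℝ) T := ⟨hr.1.le, hr.2.le.trans hs.2⟩
    have hx'r : x' r = x r := by simp [hx'def, max_eq_left hr.1.le]
    rw [hx'r]
    exact le_trans (hxz r hr') (hz_le_zl r s hr.2)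
  -- now fix t and w
  intro t ht w hw hGw
  -- the generalized inverse σ of z
  set σ : ℝ → ℝ := fun u => sInf (insert t {s : ℝ | s ∈ Ioc (0:ℝ) t ∧ u ≤ z s}) with hσdef
  have hbdd : ∀ u : ℝ, BddBelow (insert t {s : ℝ | s ∈ Ioc (0:ℝ) t ∧ u ≤ z s}) := by
    intro u
    refine ⟨0, fun b hb => ?_⟩
    rcases hb with rfl | hb
    · exact ht.1
    · exact hb.1.1.le
  have hne : ∀ u : ℝ, (insert t {s : ℝ | s ∈ Ioc (0:ℝ) t ∧ u ≤ z s}).Nonempty :=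
    fun u => insert_nonempty _ _
  have hσ_le_t : ∀ u, σ u ≤ t := fun u => csInf_le (hbdd u) (mem_insert _ _)
  have hσ_mono : Monotone σ := by
    intro u v huv
    exact csInf_le_csInf (hbdd u) (hne v)
      (insert_subset_insert (fun s hs => ⟨hs.1, le_trans huv hs.2⟩))
  have hσ_meas : Measurable σ := hσ_mono.measurable
  have huz : ∀ u ∈ Ioc H (z t), u ≤ z (σ u) := by
    intro u hu
    refine le_of_forall_pos_le_add ?_
    intro ε hε
    obtain ⟨δ, hδ, hδ2⟩ := hz_rc (σ u) ε hε
    obtain ⟨b, hb, hblt⟩ := exists_lt_of_csInf_lt (hne u) (lt_add_of_pos_right (σ u) hδ)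
    have hub : u ≤ z b := by
      rcases hb with rfl | hb
      · exact hu.2
      · exact hb.2
    have hzb : z b ≤ z (σ u + δ) := hz_mono hblt.le
    linarith
  have hzlσ : ∀ u ∈ Ioc H (z t), zl (σ u) ≤ u := by
    intro u hu
    refine le_of_tendsto (hzl_lim (σ u)) ?_
    filter_upwards with n
    set r : ℝ := σ u - 1/(n+1) with hrdef
    have hr : r < σ u := by
      have : (0:ℝ) < 1/(n+1) := by positivity
      simp only [hrdef]
      linarith
    show z r ≤ u
    rcases le_or_gt r 0 with h0 | h0
    · rw [hz_nonpos r h0]; exact hu.1.le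
    · by_contra hzr
      push_neg at hzr
      have hrt : r ≤ t := le_trans hr.le (hσ_le_t u)
      have hmem : r ∈ {s : ℝ | s ∈ Ioc (0:ℝ) t ∧ u ≤ z s} := ⟨⟨h0, hrt⟩, hzr.le⟩
      have := csInf_le (hbdd u) (mem_insert_of_mem _ hmem)
      exact absurd this (not_le.mpr hr)
  have hset : ∀ b : ℝ, σ ⁻¹' (Iic b) ∩ Ioc H (z t) = Ioc H (z (min b t)) := by
    intro b
    ext u
    simp only [mem_inter_iff, mem_preimage, mem_Iic, mem_Ioc]
    constructor
    · rintro ⟨hσb, hu1, hu2⟩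
      refine ⟨hu1, ?_⟩
      exact le_trans (huz u ⟨hu1, hu2⟩) (hz_mono (le_min hσb (hσ_le_t u)))
    · rintro ⟨huH, huzb⟩
      have hzbt : z (min b t) ≤ z t := hz_mono (min_le_right _ _)
      have hu : u ∈ Ioc H (z t) := ⟨huH, le_trans huzb hzbt⟩
      refine ⟨?_, hu.1, hu.2⟩
      rcases le_total t b with htb | hbt
      · exact le_trans (hσ_le_t u) htb
      · rw [min_eq_left hbt] at huzb
        have hb0 : 0 < b := by
          by_contra hb0
          push_neg at hb0
          rw [hz_nonpos b hb0] at huzb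
          exact absurd huzb (not_le.mpr huH)
        exact csInf_le (hbdd u) (mem_insert_of_mem _ ⟨⟨hb0, hbt⟩, huzb⟩)
  -- the pushforward identity
  haveI hfin1 : IsFiniteMeasure (volume.restrict (Ioc H (z t))) := by
    constructor
    rw [Measure.restrict_apply_univ, Real.volume_Ioc]
    exact ENNReal.ofReal_lt_top
  haveI hfin2 : IsFiniteMeasure (ν.restrict (Ioc 0 t)) := by
    constructor
    rw [Measure.restrict_apply_univ]
    exact (hν_ne _).lt_top
  have hρν : Measure.map σ (volume.restrict (Ioc H (z t))) = ν.restrict (Ioc 0 t) := by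
    refine Measure.ext_of_Iic _ _ (fun b => ?_)
    rw [Measure.map_apply hσ_meas measurableSet_Iic,
      Measure.restrict_apply (hσ_meas measurableSet_Iic), hset b, Real.volume_Ioc]
    have h2 : z (min b t) - H = (ν (Ioc 0 (min b t))).toReal := by
      have h : z (min b t) = H + (ν (Ioc 0 (min b t))).toReal := rfl
      linarith
    rw [h2, ENNReal.ofReal_toReal (hν_ne _), Measure.restrict_apply measurableSet_Iic]
    congr 1
    ext u
    simp only [mem_inter_iff, mem_Iic, mem_Ioc, le_min_iff]
    tauto
  -- the main lintegral estimate
  set F : ℝ → ℝ≥0∞ := fun s => ENNReal.ofReal ((η' (zl s))⁻¹) with hFdef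
  have hF_meas : Measurable F :=
    ENNReal.measurable_ofReal.comp ((hη'_meas.comp hzl_mono.measurable).inv)
  have hHzt : H ≤ z t := hz_H t
  have key1 : ∫⁻ u in Ioc H (z t), ENNReal.ofReal ((η u)⁻¹) ∂volume ≤ ENNReal.ofReal (A t) := by
    calc ∫⁻ u in Ioc H (z t), ENNReal.ofReal ((η u)⁻¹) ∂volume
        ≤ ∫⁻ u in Ioc H (z t), F (σ u) ∂volume := by
          refine setLIntegral_mono (hF_meas.comp hσ_meas) (fun u hu => ?_)
          apply ENNReal.ofReal_le_ofReal
          have h1 : zl (σ u) ≤ u := hzlσ u hu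
          have h2 : H ≤ zl (σ u) := hzl_H _
          have hu0 : 0 < u := lt_trans hH hu.1
          have hη1 : 0 < η' (zl (σ u)) := hη'_pos _ (lt_of_lt_of_le hH h2)
          have hη2 : η' (zl (σ u)) ≤ η' u := hη'_mono h1
          rw [← hη'_eq u hu0.le]
          exact inv_anti₀ hη1 hη2
      _ = ∫⁻ s, F s ∂(Measure.map σ (volume.restrict (Ioc H (z t)))) :=
          (lintegral_map hF_meas hσ_meas).symm
      _ = ∫⁻ s, F s ∂(ν.restrict (Ioc 0 t)) := by rw [hρν]
      _ = ∫⁻ s, F s ∂((A.measure.restrict (Ioc 0 t)).withDensity D) := by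
          rw [hνdef, restrict_withDensity measurableSet_Ioc,
            Measure.restrict_restrict measurableSet_Ioc,
            inter_eq_left.mpr (Ioc_subset_Ioc_right ht.2)]
      _ = ∫⁻ s in Ioc (0:ℝ) t, (D * F) s ∂A.measure := by
          rw [lintegral_withDensity_eq_lintegral_mul _ hD_meas hF_meas]
      _ ≤ ∫⁻ _ in Ioc (0:ℝ) t, 1 ∂A.measure := by
          refine setLIntegral_mono measurable_const (fun s hs => ?_)
          have hs' : s ∈ Ioc (0:ℝ) T := Ioc_subset_Ioc_right ht.2 hs
          have h1 : L s ≤ zl s := hxl_le_zl s hs'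
          have h2 : η' (L s) ≤ η' (zl s) := hη'_mono h1
          have h3 : 0 < η' (zl s) := hη'_pos _ (lt_of_lt_of_le hH (hzl_H s))
          show ENNReal.ofReal (η' (L s)) * ENNReal.ofReal ((η' (zl s))⁻¹) ≤ 1
          calc ENNReal.ofReal (η' (L s)) * ENNReal.ofReal ((η' (zl s))⁻¹)
              = ENNReal.ofReal (η' (L s) * (η' (zl s))⁻¹) :=
                (ENNReal.ofReal_mul (hη'_nonneg _)).symm
            _ ≤ ENNReal.ofReal 1 := ENNReal.ofReal_le_ofReal (by
                have h4 := mul_le_mul_of_nonneg_right h2 (inv_nonneg.mpr (hη'_nonneg (zl s)))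
                rwa [mul_inv_cancel₀ (ne_of_gt h3)] at h4)
            _ = 1 := ENNReal.ofReal_one
      _ = A.measure (Ioc 0 t) := setLIntegral_one _
      _ = ENNReal.ofReal (A t - A 0) := A.measure_Ioc 0 t
      _ = ENNReal.ofReal (A t) := by rw [hA0, sub_zero]
  have hg_meas : Measurable (fun u : ℝ => (η' u)⁻¹) := hη'_meas.inv
  have key2 : ∫ u in H..(z t), (η u)⁻¹ ≤ A t := by
    rw [intervalIntegral.integral_of_le hHzt]
    have hae : AEStronglyMeasurable (fun u : ℝ => (η u)⁻¹) (volume.restrict (Ioc H (z t))) := by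
      refine (hg_meas.aestronglyMeasurable).congr ?_
      refine (ae_restrict_iff' measurableSet_Ioc).mpr (Eventually.of_forall fun u hu => ?_)
      simp only []
      rw [hη'_eq u (le_of_lt (lt_trans hH hu.1))]
    rw [MeasureTheory.integral_eq_lintegral_of_nonneg_ae
      (Eventually.of_forall fun u => inv_nonneg.mpr (hη_nonneg u)) hae]
    calc (∫⁻ u in Ioc H (z t), ENNReal.ofReal ((η u)⁻¹) ∂volume).toReal
        ≤ (ENNReal.ofReal (A t)).toReal := ENNReal.toReal_mono ENNReal.ofReal_ne_top key1
      _ = A t := ENNReal.toReal_ofReal (hA_nonneg t)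
  -- interval integrability and congruence
  have hint : ∀ a b : ℝ, 0 < a → 0 < b →
      IntervalIntegrable (fun u : ℝ => (η' u)⁻¹) volume a b := by
    intro a b ha hb
    apply AntitoneOn.intervalIntegrable
    intro u hu v hv huv
    have hu0 : 0 < u := lt_of_lt_of_le (lt_min ha hb) hu.1
    exact inv_anti₀ (hη'_pos u hu0) (hη'_mono huv)
  have hcong : ∀ a b : ℝ, 0 < a → 0 < b →
      (∫ u in a..b, (η u)⁻¹) = ∫ u in a..b, (η' u)⁻¹ := by
    intro a b ha hb
    refine intervalIntegral.integral_congr (fun u hu => ?_)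
    have hu0 : 0 < u := lt_of_lt_of_le (lt_min ha hb) hu.1
    rw [hη'_eq u hu0.le]
  have hzt_pos : 0 < z t := lt_of_lt_of_le hH (hz_H t)
  have e1 : (∫ u in c..w, (η' u)⁻¹) = (∫ u in c..H, (η' u)⁻¹) + A t := by
    rw [← hcong c w hc hw, ← hcong c H hc hH]
    exact hGw
  have e2 : (∫ u in c..(z t), (η' u)⁻¹)
      = (∫ u in c..H, (η' u)⁻¹) + ∫ u in H..(z t), (η' u)⁻¹ :=
    (intervalIntegral.integral_add_adjacent_intervals (hint c H hc hH)
      (hint H (z t) hH hzt_pos)).symm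
  have e3 : ∫ u in H..(z t), (η' u)⁻¹ ≤ A t := by
    rw [← hcong H (z t) hH hzt_pos]
    exact key2
  have hle : (∫ u in c..(z t), (η' u)⁻¹) ≤ ∫ u in c..w, (η' u)⁻¹ := by
    rw [e1, e2]
    linarith
  have hzw : z t ≤ w := by
    by_contra hzw
    push_neg at hzw
    have e4 : (∫ u in c..(z t), (η' u)⁻¹)
        = (∫ u in c..w, (η' u)⁻¹) + ∫ u in w..(z t), (η' u)⁻¹ :=
      (intervalIntegral.integral_add_adjacent_intervals (hint c w hc hw)
        (hint w (z t) hw hzt_pos)).symm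
    have e5 : 0 < ∫ u in w..(z t), (η' u)⁻¹ := by
      refine intervalIntegral.intervalIntegral_pos_of_pos_on (hint w (z t) hw hzt_pos)
        (fun u hu => ?_) hzw
      exact inv_pos.mpr (hη'_pos u (lt_trans hw hu.1))
    linarith
  exact le_trans (hxz t ht) hzw
end

section
/- Let η : [0,∞) → [0,∞) be non-decreasing with η > 0 on (0,∞), p ∈ (0,1), and define η_p(x) = (p/(1-p))η(x^{1/p})x^{1-1/p}. If η_p is concave on (0,∞) with lim_{x→0+} η_p(x) = 0, then η is concave on (0,∞). -/
open Set Filter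

/-- If `η_p(x) = (p/(1-p))η(x^{1/p})x^{1-1/p}` is concave on `(0,∞)` with
`η_p(0+) = 0`, then `η` is concave on `(0,∞)`. -/
theorem stmt_7 (p : ℝ) (hp : p ∈ Ioo (0:ℝ) 1) (η : ℝ → ℝ)
    (hmono : MonotoneOn η (Ici 0)) (hnonneg : ∀ u, 0 ≤ η u)
    (hpos : ∀ u : ℝ, 0 < u → 0 < η u)
    (hconc : ConcaveOn ℝ (Ioi 0) (fun x => (p / (1 - p)) * η (x ^ (1/p)) * x ^ (1 - 1/p)))
    (hlim : Tendsto (fun x => (p / (1 - p)) * η (x ^ (1/p)) * x ^ (1 - 1/p))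
      (nhdsWithin 0 (Ioi 0)) (nhds 0)) :
    ConcaveOn ℝ (Ioi 0) η := by
  obtain ⟨hp0, hp1⟩ := hp
  have h1p : (0:ℝ) < 1 - p := by linarith
  set c : ℝ := p / (1 - p) with hc
  have hcpos : 0 < c := div_pos hp0 h1p
  set f : ℝ → ℝ := fun x => c * η (x ^ (1/p)) * x ^ (1 - 1/p) with hf
  have hfnn : ∀ x : ℝ, 0 < x → 0 ≤ f x := by
    intro x hx
    have : (0:ℝ) < x ^ (1 - 1/p) := Real.rpow_pos_of_pos hx _
    exact mul_nonneg (mul_nonneg hcpos.le (hnonneg _)) this.le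
  have hrepr : ∀ y : ℝ, 0 < y → η y = (1/c) * f (y ^ p) * y ^ (1 - p) := by
    intro y hy
    have h1 : (y ^ p) ^ (1/p) = y := by
      rw [← Real.rpow_mul hy.le, mul_one_div, div_self hp0.ne', Real.rpow_one]
    have h2 : (y ^ p) ^ (1 - 1/p) = y ^ (p - 1) := by
      rw [← Real.rpow_mul hy.le]; congr 1; field_simp
    have h3 : y ^ (p-1) * y ^ (1-p) = 1 := by
      rw [← Real.rpow_add hy]; norm_num
    simp only [hf, h1, h2]
    have : 1/c * (c * η y * y ^ (p-1)) * y ^ (1-p)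
        = (1/c * c) * (η y * (y ^ (p-1) * y ^ (1-p))) := by ring
    rw [this, h3, one_div_mul_cancel hcpos.ne', one_mul, mul_one]
  refine ⟨convex_Ioi 0, ?_⟩
  intro y1 hy1 y2 hy2 t1 t2 ht1 ht2 hst
  simp only [smul_eq_mul]
  set y0 : ℝ := t1 * y1 + t2 * y2 with hy0def
  have hy0 : 0 < y0 := by
    have := (convex_Ioi (0:ℝ)) hy1 hy2 ht1 ht2 hst
    simpa using this
  set x0 : ℝ := y0 ^ p with hx0def
  have hx0 : 0 < x0 := Real.rpow_pos_of_pos hy0 _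
  set S : Set ℝ := (fun z => (f z - f x0) / (z - x0)) '' Ioi x0 with hS
  have hSne : S.Nonempty := ⟨_, ⟨x0 + 1, by simp, rfl⟩⟩
  have hSbdd : BddAbove S := by
    refine ⟨(f x0 - f (x0/2)) / (x0 - x0/2), ?_⟩
    rintro s ⟨z, hz, rfl⟩
    exact hconc.slope_anti_adjacent (by simp [hx0, half_pos hx0] : x0/2 ∈ Ioi (0:ℝ))
      (lt_trans hx0 hz) (half_lt_self hx0) hz
  set a : ℝ := sSup S with ha
  set b : ℝ := f x0 - a * x0 with hb
  have hright : ∀ z, x0 < z → f z ≤ a * z + b := by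
    intro z hz
    have hmem : (f z - f x0) / (z - x0) ∈ S := ⟨z, hz, rfl⟩
    have := le_csSup hSbdd hmem
    have hzx : 0 < z - x0 := by linarith
    rw [div_le_iff₀ hzx] at this
    simp only [hb]; nlinarith
  have ha0 : 0 ≤ a := by
    by_contra h
    push_neg at h
    have hane : a ≠ 0 := ne_of_lt h
    set z : ℝ := x0 + (f x0 + 1) / (-a) with hz
    have hzpos : x0 < z := by
      have : 0 < (f x0 + 1) / (-a) := div_pos (by linarith [hfnn x0 hx0]) (by linarith)
      simp [hz]; linarith
    have h1 := hright z hzpos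
    have h2 : a * z + b = f x0 + a * ((f x0 + 1) / (-a)) := by
      simp only [hb, hz]; ring
    have h3 : a * ((f x0 + 1) / (-a)) = -(f x0 + 1) := by
      field_simp
    have := hfnn z (lt_trans hx0 hzpos)
    rw [h2, h3] at h1
    linarith
  have hleft : ∀ x, 0 < x → x < x0 → f x ≤ a * x + b := by
    intro x hx hxx0
    have hub : a ≤ (f x0 - f x) / (x0 - x) := by
      apply csSup_le hSne
      rintro s ⟨z, hz, rfl⟩
      exact hconc.slope_anti_adjacent hx (lt_trans hx0 hz) hxx0 hz
    have hxx : 0 < x0 - x := by linarith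
    rw [le_div_iff₀ hxx] at hub
    simp only [hb]; nlinarith
  have hdom : ∀ x, 0 < x → f x ≤ a * x + b := by
    intro x hx
    rcases lt_trichotomy x x0 with h | h | h
    · exact hleft x hx h
    · rw [h]; simp only [hb]; linarith
    · exact hright x h
  have hb0 : 0 ≤ b := by
    by_contra h
    push_neg at h
    set ε : ℝ := min (x0/2) (-b / (2*(a+1))) with hε
    have hεpos : 0 < ε := lt_min (half_pos hx0) (div_pos (by linarith) (by linarith))
    have h1 : 0 ≤ f ε := hfnn ε hεpos
    have h2 : f ε ≤ a * ε + b := hdom ε hεpos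
    have h3 : ε ≤ -b / (2*(a+1)) := min_le_right _ _
    have h4 : a * ε ≤ (a+1) * ε := by nlinarith
    have h4' : (a+1) * ε ≤ (a+1) * (-b / (2*(a+1))) :=
      mul_le_mul_of_nonneg_left h3 (by linarith)
    have h5 : (a+1) * (-b / (2*(a+1))) = -b/2 := by
      field_simp
    nlinarith
  have hrp := Real.concaveOn_rpow (by linarith : (0:ℝ) ≤ 1 - p) (by linarith : (1:ℝ)-p ≤ 1)
  have hrpineq : t1 * y1 ^ (1-p) + t2 * y2 ^ (1-p) ≤ y0 ^ (1-p) := by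
    have := hrp.2 (Set.mem_Ici.mpr (le_of_lt hy1)) (Set.mem_Ici.mpr (le_of_lt hy2)) ht1 ht2 hst
    simpa using this
  have hc' : (0:ℝ) ≤ 1/c := by positivity
  have hbound : ∀ y : ℝ, 0 < y → η y ≤ (1/c) * (a * y + b * y ^ (1-p)) := by
    intro y hy
    have hyp : (0:ℝ) < y ^ p := Real.rpow_pos_of_pos hy _
    have h1 := hdom (y ^ p) hyp
    have h2 : y ^ p * y ^ (1-p) = y := by
      rw [← Real.rpow_add hy]; norm_num
    have hypow : (0:ℝ) < y ^ (1-p) := Real.rpow_pos_of_pos hy _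
    have key : 1/c * (f (y^p) * y^(1-p)) ≤ 1/c * ((a * y^p + b) * y^(1-p)) :=
      mul_le_mul_of_nonneg_left (mul_le_mul_of_nonneg_right h1 hypow.le) hc'
    rw [hrepr y hy]
    calc 1/c * f (y^p) * y^(1-p) = 1/c * (f (y^p) * y^(1-p)) := by ring
      _ ≤ 1/c * ((a * y^p + b) * y^(1-p)) := key
      _ = 1/c * (a * (y^p * y^(1-p)) + b * y^(1-p)) := by ring
      _ = 1/c * (a * y + b * y^(1-p)) := by rw [h2]
  have h2y0 : y0 ^ p * y0 ^ (1-p) = y0 := by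
    rw [← Real.rpow_add hy0]; norm_num
  have hfx0 : f x0 = a * x0 + b := by simp only [hb]; ring
  have heq : η y0 = (1/c) * (a * y0 + b * y0 ^ (1-p)) := by
    calc η y0 = 1/c * f (y0 ^ p) * y0 ^ (1-p) := hrepr y0 hy0
      _ = 1/c * (a * x0 + b) * y0 ^ (1-p) := by rw [← hx0def, hfx0]
      _ = 1/c * (a * (y0^p * y0^(1-p)) + b * y0^(1-p)) := by rw [hx0def]; ring
      _ = 1/c * (a * y0 + b * y0^(1-p)) := by rw [h2y0]
  have b1 := hbound y1 hy1
  have b2 := hbound y2 hy2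
  rw [heq]
  calc t1 * η y1 + t2 * η y2
      ≤ t1 * (1/c * (a*y1 + b*y1^(1-p))) + t2 * (1/c * (a*y2 + b*y2^(1-p))) :=
        add_le_add (mul_le_mul_of_nonneg_left b1 ht1) (mul_le_mul_of_nonneg_left b2 ht2)
    _ = 1/c * (a * (t1*y1 + t2*y2) + b * (t1 * y1^(1-p) + t2 * y2^(1-p))) := by ring
    _ ≤ 1/c * (a * y0 + b * y0^(1-p)) := by
        refine mul_le_mul_of_nonneg_left ?_ hc'
        have hbs := mul_le_mul_of_nonneg_left hrpineq hb0
        rw [hy0def] at hbs ⊢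
        linarith
end

section
/- For all real numbers x, y with 0 ≤ x ≤ y ≤ 1/e: |x·log(1/x) − y·log(1/y)| ≤ (y − x)·log(1/(y − x)), where 0·log(1/0) is interpreted as 0. -/
open Real

lemma negMulLog_subadd {a b : ℝ} (ha : 0 ≤ a) (hb : 0 ≤ b) :
    Real.negMulLog (a + b) ≤ Real.negMulLog a + Real.negMulLog b := by
  have key : ∀ c : ℝ, 0 ≤ c → c ≤ a + b → c * Real.log c ≤ c * Real.log (a + b) := by
    intro c hc hcab
    rcases hc.eq_or_lt with rfl | hc
    · simp
    · exact mul_le_mul_of_nonneg_left (Real.log_le_log hc hcab) hc.le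
  have h1 := key a ha (by linarith)
  have h2 := key b hb (by linarith)
  simp only [Real.negMulLog, neg_mul]
  nlinarith

lemma negMulLog_mono {a b : ℝ} (ha : 0 ≤ a) (hab : a ≤ b) (hb : b ≤ (Real.exp 1)⁻¹) :
    Real.negMulLog a ≤ Real.negMulLog b := by
  have hmono : MonotoneOn Real.negMulLog (Set.Icc 0 (Real.exp 1)⁻¹) := by
    have hdiff : DifferentiableOn ℝ Real.negMulLog (interior (Set.Icc 0 (Real.exp 1)⁻¹)) := by
      intro s hs
      rw [interior_Icc] at hs
      exact ((Real.differentiableOn_negMulLog s (by simp [hs.1.ne'])).differentiableAt (compl_singleton_mem_nhds hs.1.ne')).differentiableWithinAt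
    apply monotoneOn_of_deriv_nonneg (convex_Icc _ _) Real.continuous_negMulLog.continuousOn hdiff
    intro t ht
    rw [interior_Icc] at ht
    have ht0 : 0 < t := ht.1
    rw [Real.deriv_negMulLog ht0.ne']
    have h := Real.log_lt_log ht0 ht.2
    rw [Real.log_inv, Real.log_exp] at h
    linarith
  exact hmono ⟨ha, le_trans hab hb⟩ ⟨le_trans ha hab, hb⟩ hab

/-- For `0 ≤ x ≤ y ≤ 1/e`:
`|x·log(1/x) − y·log(1/y)| ≤ (y − x)·log(1/(y − x))`. -/
theorem stmt_11 (x y : ℝ) (hx : 0 ≤ x) (hxy : x ≤ y) (hy : y ≤ (Real.exp 1)⁻¹) :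
    |x * Real.log (1/x) - y * Real.log (1/y)|
      ≤ (y - x) * Real.log (1/(y - x)) := by
  have hrw : ∀ c : ℝ, c * Real.log (1/c) = Real.negMulLog c := by
    intro c
    rw [Real.negMulLog, one_div, Real.log_inv]
    ring
  rw [hrw, hrw, hrw]
  have h1 : Real.negMulLog x ≤ Real.negMulLog y := negMulLog_mono hx hxy hy
  rw [abs_sub_comm, abs_of_nonneg (by linarith)]
  have h2 : Real.negMulLog y ≤ Real.negMulLog x + Real.negMulLog (y - x) := by
    have := negMulLog_subadd hx (by linarith : (0:ℝ) ≤ y - x)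
    simpa using this
  linarith
end

section
/- Let p ∈ (0,1), set α₁ = (1-p)^{-1/p} and β = (1-p)^{-1}. Let η : [0,∞) → [0,∞) be non-decreasing with η > 0 on (0,∞) such that η_p(x) = (p/(1-p))η(x^{1/p})x^{1-1/p} is non-decreasing and locally Lipschitz on (0,∞), and let G(v) = ∫_c^v du/η(u) (c > 0) with range all of ℝ (or at least containing all relevant values). Then for all h > 0 and all x ≥ 0: α₁·G⁻¹(G(h) + x) ≤ G⁻¹(G(α₁·h) + β·x). -/
open MeasureTheory Set

/-- Comparison of the `A_{no sup}` and `A_{sup}` bounds: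
`α₁·G⁻¹(G(h) + x) ≤ G⁻¹(G(α₁h) + βx)` for `α₁ = (1-p)^{-1/p}`, `β = (1-p)⁻¹`. -/
theorem stmt_13 (p c : ℝ) (hp : p ∈ Ioo (0:ℝ) 1) (hc : 0 < c) (η : ℝ → ℝ)
    (hmono : MonotoneOn η (Ici 0)) (hnonneg : ∀ u, 0 ≤ η u)
    (hpos : ∀ u : ℝ, 0 < u → 0 < η u)
    (hηp_mono : MonotoneOn
      (fun x => (p / (1 - p)) * η (x ^ (1/p)) * x ^ (1 - 1/p)) (Ioi 0))
    (hηp_lip : ∀ a ∈ Ioi (0:ℝ), ∃ ε > (0:ℝ), ∃ K : NNReal,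
      LipschitzOnWith K
        (fun x => (p / (1 - p)) * η (x ^ (1/p)) * x ^ (1 - 1/p))
        (Metric.ball a ε ∩ Ioi 0))
    (hsurj : ∀ y : ℝ, ∃ w > (0:ℝ), (∫ u in c..w, (η u)⁻¹) = y) :
    ∀ h : ℝ, 0 < h → ∀ x : ℝ, 0 ≤ x → ∀ w₁ > (0:ℝ), ∀ w₂ > (0:ℝ),
      (∫ u in c..w₁, (η u)⁻¹) = (∫ u in c..h, (η u)⁻¹) + x →
      (∫ u in c..w₂, (η u)⁻¹)
        = (∫ u in c..((1 - p) ^ (-(1:ℝ)/p) * h), (η u)⁻¹) + (1 - p)⁻¹ * x →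
      (1 - p) ^ (-(1:ℝ)/p) * w₁ ≤ w₂ := by
  obtain ⟨hp0, hp1⟩ := hp
  have hq0 : (0:ℝ) < 1 - p := by linarith
  set α : ℝ := (1 - p) ^ (-(1:ℝ)/p) with hαdef
  have hα0 : 0 < α := Real.rpow_pos_of_pos hq0 _
  have hα1 : 1 < α := by
    rw [hαdef, Real.one_lt_rpow_iff_of_pos hq0]
    right
    constructor
    · linarith
    · have : 0 < 1 / p := by positivity
      rw [neg_div]
      linarith
  -- interval integrability of 1/η between positive endpoints
  have hint : ∀ a b : ℝ, 0 < a → 0 < b →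
      IntervalIntegrable (fun u => (η u)⁻¹) volume a b := by
    intro a b ha hb
    apply AntitoneOn.intervalIntegrable
    intro u hu v hv huv
    have h0 : (0:ℝ) < min a b := lt_min ha hb
    have hu0 : 0 < u := lt_of_lt_of_le h0 hu.1
    have hv0 : 0 < v := lt_of_lt_of_le h0 hv.1
    have := hmono (le_of_lt hu0 : u ∈ Ici (0:ℝ)) (le_of_lt hv0 : v ∈ Ici (0:ℝ)) huv
    exact inv_anti₀ (hpos u hu0) this
  have hint' : ∀ a b : ℝ, 0 < a → 0 < b →
      IntervalIntegrable (fun u => (η (α * u))⁻¹) volume a b := by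
    intro a b ha hb
    apply AntitoneOn.intervalIntegrable
    intro u hu v hv huv
    have h0 : (0:ℝ) < min a b := lt_min ha hb
    have hu0 : 0 < u := lt_of_lt_of_le h0 hu.1
    have hv0 : 0 < v := lt_of_lt_of_le h0 hv.1
    have := hmono (le_of_lt (mul_pos hα0 hu0) : α * u ∈ Ici (0:ℝ))
      (le_of_lt (mul_pos hα0 hv0) : α * v ∈ Ici (0:ℝ))
      (by nlinarith)
    exact inv_anti₀ (hpos _ (mul_pos hα0 hu0)) this
  -- key pointwise inequality
  have hkey : ∀ v : ℝ, 0 < v → (1 - p) * α * η v ≤ η (α * v) := by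
    intro v hv
    have hvp : (0:ℝ) < v ^ p := Real.rpow_pos_of_pos hv p
    have hqi : (1:ℝ) ≤ (1 - p)⁻¹ := by
      rw [le_inv_comm₀ one_pos hq0]; linarith
    have hle : v ^ p ≤ (1 - p)⁻¹ * v ^ p := le_mul_of_one_le_left hvp.le hqi
    have H := hηp_mono (show v ^ p ∈ Ioi (0:ℝ) from hvp)
      (show (1 - p)⁻¹ * v ^ p ∈ Ioi (0:ℝ) from mul_pos (inv_pos.2 hq0) hvp) hle
    simp only at H
    have e1 : (v ^ p) ^ (1/p : ℝ) = v := by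
      rw [← Real.rpow_mul hv.le, mul_one_div, div_self hp0.ne', Real.rpow_one]
    have e2 : ((1 - p)⁻¹ * v ^ p) ^ (1/p : ℝ) = α * v := by
      rw [Real.mul_rpow (inv_nonneg.2 hq0.le) hvp.le, e1]
      congr 1
      rw [← Real.rpow_neg_one (1 - p), ← Real.rpow_mul hq0.le, hαdef]
      congr 1; ring
    have e3 : (v ^ p) ^ (1 - 1/p : ℝ) = v ^ (p - 1 : ℝ) := by
      rw [← Real.rpow_mul hv.le]
      congr 1; field_simp
    have e4 : ((1 - p)⁻¹ * v ^ p) ^ (1 - 1/p : ℝ)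
        = (1 - p) ^ (1/p - 1 : ℝ) * v ^ (p - 1 : ℝ) := by
      rw [Real.mul_rpow (inv_nonneg.2 hq0.le) hvp.le, e3]
      congr 1
      rw [← Real.rpow_neg_one (1 - p), ← Real.rpow_mul hq0.le]
      congr 1; ring
    rw [e1, e2, e3, e4] at H
    set A : ℝ := (1 - p) ^ (1/p - 1 : ℝ) with hAdef
    have hA0 : 0 < A := Real.rpow_pos_of_pos hq0 _
    have hA1 : (1 - p) * α * A = 1 := by
      have hαA : α * A = (1 - p)⁻¹ := by
        rw [hαdef, hAdef, ← Real.rpow_add hq0,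
          show (-1/p + (1/p - 1) : ℝ) = -1 by ring, Real.rpow_neg_one]
      rw [mul_assoc, hαA, mul_inv_cancel₀ hq0.ne']
    have hpq : 0 < p / (1 - p) := div_pos hp0 hq0
    have hv1 : 0 < v ^ (p - 1 : ℝ) := Real.rpow_pos_of_pos hv _
    -- from H : (p/(1-p)) * η v * v^(p-1) ≤ (p/(1-p)) * η (α v) * (A * v^(p-1))
    have h5 : η v ≤ η (α * v) * A := by
      have h6 : (p / (1 - p) * v ^ (p - 1:ℝ)) * η v
          ≤ (p / (1 - p) * v ^ (p - 1:ℝ)) * (η (α * v) * A) := by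
        calc (p / (1 - p) * v ^ (p - 1:ℝ)) * η v
            = p / (1 - p) * η v * v ^ (p - 1:ℝ) := by ring
          _ ≤ p / (1 - p) * η (α * v) * (A * v ^ (p - 1:ℝ)) := H
          _ = (p / (1 - p) * v ^ (p - 1:ℝ)) * (η (α * v) * A) := by ring
      exact le_of_mul_le_mul_left h6 (mul_pos hpq hv1)
    calc (1 - p) * α * η v ≤ (1 - p) * α * (η (α * v) * A) :=
          mul_le_mul_of_nonneg_left h5 (by positivity)
      _ = ((1 - p) * α * A) * η (α * v) := by ring
      _ = η (α * v) := by rw [hA1, one_mul]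
  intro h hh x hx w₁ hw₁ w₂ hw₂ hG1 hG2
  have hαh : 0 < α * h := mul_pos hα0 hh
  have hαw₁ : 0 < α * w₁ := mul_pos hα0 hw₁
  -- h ≤ w₁
  have hhw : h ≤ w₁ := by
    by_contra hcon
    push_neg at hcon
    have hsplit := intervalIntegral.integral_add_adjacent_intervals
      (hint c w₁ hc hw₁) (hint w₁ h hw₁ hh)
    have hposint : 0 < ∫ u in w₁..h, (η u)⁻¹ :=
      intervalIntegral.intervalIntegral_pos_of_pos_on (hint w₁ h hw₁ hh)
        (fun u hu => inv_pos.2 (hpos u (lt_trans hw₁ hu.1))) hcon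
    linarith
  -- the value x as an integral
  have hx' : (∫ t in h..w₁, (η t)⁻¹) = x := by
    have hsplit := intervalIntegral.integral_add_adjacent_intervals
      (hint c h hc hh) (hint h w₁ hh hw₁)
    linarith
  -- change of variables
  have hsub : (∫ u in α * h..α * w₁, (η u)⁻¹) = α * ∫ t in h..w₁, (η (α * t))⁻¹ := by
    rw [intervalIntegral.integral_comp_mul_left (fun u => (η u)⁻¹) (ne_of_gt hα0)]
    simp [smul_eq_mul]
    field_simp
  -- integral comparison
  have hmono_int : (∫ t in h..w₁, (η (α * t))⁻¹)
      ≤ ∫ t in h..w₁, ((1 - p)⁻¹ * α⁻¹) * (η t)⁻¹ := by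
    apply intervalIntegral.integral_mono_on hhw (hint' h w₁ hh hw₁)
      ((hint h w₁ hh hw₁).const_mul _)
    intro t ht
    have ht0 : 0 < t := lt_of_lt_of_le hh ht.1
    have hηt : 0 < η t := hpos t ht0
    have hk := hkey t ht0
    rw [show (1 - p)⁻¹ * α⁻¹ * (η t)⁻¹ = ((1 - p) * α * η t)⁻¹ by
      rw [mul_inv, mul_inv]]
    exact inv_anti₀ (by positivity) hk
  have hmain : (∫ u in α * h..α * w₁, (η u)⁻¹) ≤ (1 - p)⁻¹ * x := by
    rw [hsub]
    have hconst : (∫ t in h..w₁, ((1 - p)⁻¹ * α⁻¹) * (η t)⁻¹)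
        = (1 - p)⁻¹ * α⁻¹ * x := by
      rw [intervalIntegral.integral_const_mul, hx']
    calc α * ∫ t in h..w₁, (η (α * t))⁻¹
        ≤ α * ((1 - p)⁻¹ * α⁻¹ * x) := by
          apply mul_le_mul_of_nonneg_left _ hα0.le
          rw [← hconst]; exact hmono_int
      _ = (1 - p)⁻¹ * x := by field_simp
  -- G(α w₁) ≤ G(w₂)
  have hGle : (∫ u in c..α * w₁, (η u)⁻¹) ≤ ∫ u in c..w₂, (η u)⁻¹ := by
    have hsplit := intervalIntegral.integral_add_adjacent_intervals
      (hint c (α * h) hc hαh) (hint (α * h) (α * w₁) hαh hαw₁)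
    rw [hG2]
    linarith
  -- conclude
  by_contra hcon
  push_neg at hcon
  have hsplit := intervalIntegral.integral_add_adjacent_intervals
    (hint c w₂ hc hw₂) (hint w₂ (α * w₁) hw₂ hαw₁)
  have hposint : 0 < ∫ u in w₂..α * w₁, (η u)⁻¹ :=
    intervalIntegral.intervalIntegral_pos_of_pos_on (hint w₂ (α * w₁) hw₂ hαw₁)
      (fun u hu => inv_pos.2 (hpos u (lt_trans hw₂ hu.1))) hcon
  linarith
end

section
/- Let 0 < p < q, let f : [0,∞) → [m, ∞) be strictly increasing, continuous and bijective onto [m,∞) for some m > 0, and let A, X be non-negative random variables such that E[1_{A ≤ t}·X^p] ≤ f(t)^p for all t ≥ 0. Then E[f(A)^{−q}·X^p] ≤ (q/(q−p))·m^{p−q}. -/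
open MeasureTheory Set

/-- Key step for random integrators: if `E[1_{A ≤ t}·X^p] ≤ f(t)^p` for all
`t ≥ 0`, where `f` is a continuous strictly increasing bijection from `[0,∞)`
onto `[m,∞)`, then `E[f(A)^{−q}·X^p] ≤ (q/(q−p))·m^{p−q}`. -/
theorem stmt_17 {Ω : Type*} [MeasurableSpace Ω] (μ : Measure Ω)
    [IsFiniteMeasure μ] (p q m : ℝ) (hpq : 0 < p) (hq : p < q) (hm : 0 < m)
    (f : ℝ → ℝ) (hf_mono : StrictMonoOn f (Ici 0))
    (hf_cont : ContinuousOn f (Ici 0)) (hf_surj : f '' (Ici 0) = Ici m)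
    (A X : Ω → ℝ) (hA_meas : Measurable A) (hX_meas : Measurable X)
    (hA_nonneg : ∀ ω, 0 ≤ A ω) (hX_nonneg : ∀ ω, 0 ≤ X ω)
    (hXp_int : Integrable (fun ω => X ω ^ p) μ)
    (hbound : ∀ t : ℝ, 0 ≤ t →
      (∫ ω, ({ω | A ω ≤ t}.indicator (fun ω => X ω ^ p) ω) ∂μ) ≤ f t ^ p) :
    (∫ ω, (f (A ω)) ^ (-q) * X ω ^ p ∂μ) ≤ (q / (q - p)) * m ^ (p - q) := by
  have hq0 : 0 < q := hpq.trans hq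
  have hqp : 0 < q - p := sub_pos.2 hq
  set c : ℝ := m ^ (-q) with hc_def
  set r : ℝ := -(p / q) with hr_def
  have hc0 : 0 < c := Real.rpow_pos_of_pos hm _
  have hr1 : -1 < r := by
    rw [hr_def, neg_lt, neg_neg]
    rw [div_lt_one hq0]; exact hq
  have hr1' : 0 < r + 1 := by linarith
  -- f (A ω) ≥ m
  have hfA_ge : ∀ ω, m ≤ f (A ω) := fun ω => by
    have : f (A ω) ∈ Ici m := hf_surj ▸ mem_image_of_mem f (hA_nonneg ω)
    exact this
  have hfA_pos : ∀ ω, 0 < f (A ω) := fun ω => hm.trans_le (hfA_ge ω)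
  -- measurability of f ∘ A
  have hfA_meas : Measurable fun ω => f (A ω) := by
    have h1 : Measurable fun ω => (⟨A ω, hA_nonneg ω⟩ : Ici (0:ℝ)) :=
      hA_meas.subtype_mk
    exact hf_cont.restrict.measurable.comp h1
  have hg_meas : Measurable fun ω => f (A ω) ^ (-q) := hfA_meas.pow_const (-q)
  set ν : Measure Ω := μ.withDensity (fun ω => ENNReal.ofReal (X ω ^ p)) with hν_def
  -- bound on ν of sublevel sets of A
  have hν1 : ∀ s : ℝ, 0 ≤ s → ν {ω | A ω ≤ s} ≤ ENNReal.ofReal (f s ^ p) := by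
    intro s hs
    have hset : MeasurableSet {ω | A ω ≤ s} := measurableSet_le hA_meas measurable_const
    rw [hν_def, withDensity_apply _ hset]
    rw [← ofReal_integral_eq_lintegral_ofReal (hXp_int.restrict)
      (Filter.Eventually.of_forall fun ω => Real.rpow_nonneg (hX_nonneg ω) p)]
    apply ENNReal.ofReal_le_ofReal
    rw [← integral_indicator hset]
    exact hbound s hs
  -- key lintegral bound
  have key : ∫⁻ ω, ENNReal.ofReal (f (A ω) ^ (-q) * X ω ^ p) ∂μ
      ≤ ENNReal.ofReal (q / (q - p) * m ^ (p - q)) := by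
    have h1 : ∀ ω, ENNReal.ofReal (f (A ω) ^ (-q) * X ω ^ p)
        = (ENNReal.ofReal (X ω ^ p)) * ENNReal.ofReal (f (A ω) ^ (-q)) := fun ω => by
      rw [mul_comm (f (A ω) ^ (-q)),
        ENNReal.ofReal_mul (Real.rpow_nonneg (hX_nonneg ω) p)]
    simp only [h1]
    rw [show (fun ω => ENNReal.ofReal (X ω ^ p) * ENNReal.ofReal (f (A ω) ^ (-q)))
        = (fun ω => ENNReal.ofReal (X ω ^ p)) * (fun ω => ENNReal.ofReal (f (A ω) ^ (-q)))
        from rfl,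
      ← lintegral_withDensity_eq_lintegral_mul μ
        ((hX_meas.pow_const p).ennreal_ofReal) (hg_meas.ennreal_ofReal), ← hν_def]
    rw [lintegral_eq_lintegral_meas_lt ν
      (Filter.Eventually.of_forall fun ω => Real.rpow_nonneg (hfA_pos ω).le _)
      hg_meas.aemeasurable]
    -- pointwise bound on the tail measure
    have hpt : ∀ᵐ t ∂(volume.restrict (Ioi (0:ℝ))),
        ν {a | t < f (A a) ^ (-q)}
          ≤ (Ioc (0:ℝ) c).indicator (fun t => ENNReal.ofReal (t ^ r)) t := by
      rw [ae_restrict_iff' measurableSet_Ioi]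
      refine ae_of_all _ fun t ht => ?_
      rcases le_or_gt c t with hct | htc
      · -- tail is empty
        have : {a | t < f (A a) ^ (-q)} = ∅ := by
          ext a
          simp only [mem_setOf_eq, mem_empty_iff_false, iff_false, not_lt]
          calc f (A a) ^ (-q) ≤ m ^ (-q) :=
                Real.rpow_le_rpow_of_nonpos hm (hfA_ge a) (neg_nonpos.2 hq0.le)
            _ ≤ t := hct
        rw [this]
        simp
      · -- t < c
        have ht0 : (0:ℝ) < t := ht
        have hz : -(1/q) < 0 := neg_neg_iff_pos.2 (by positivity)
        have hczm : c ^ (-(1/q)) = m := by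
          rw [hc_def, ← Real.rpow_mul hm.le]
          rw [show -q * -(1/q) = 1 by field_simp]
          exact Real.rpow_one m
        have hy : m < t ^ (-(1/q)) := by
          have := Real.rpow_lt_rpow_of_neg ht0 htc hz
          rwa [hczm] at this
        obtain ⟨s, hs0, hfs⟩ : ∃ s ∈ Ici (0:ℝ), f s = t ^ (-(1/q)) := by
          have : t ^ (-(1/q)) ∈ Ici m := hy.le
          rw [← hf_surj] at this
          exact this
        have hsub : {a | t < f (A a) ^ (-q)} ⊆ {a | A a ≤ s} := by
          intro a ha
          have ha' : t < f (A a) ^ (-q) := ha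
          have h2 : (f (A a) ^ (-q)) ^ (-(1/q)) < t ^ (-(1/q)) :=
            Real.rpow_lt_rpow_of_neg ht0 ha' hz
          have h3 : (f (A a) ^ (-q)) ^ (-(1/q)) = f (A a) := by
            rw [← Real.rpow_mul (hfA_pos a).le]
            rw [show -q * -(1/q) = 1 by field_simp]
            exact Real.rpow_one _
          rw [h3, ← hfs] at h2
          exact ((hf_mono.lt_iff_lt (hA_nonneg a) hs0).mp h2).le
        have hb : ν {a | t < f (A a) ^ (-q)} ≤ ENNReal.ofReal (t ^ r) := by
          calc ν {a | t < f (A a) ^ (-q)} ≤ ν {a | A a ≤ s} := measure_mono hsub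
            _ ≤ ENNReal.ofReal (f s ^ p) := hν1 s hs0
            _ = ENNReal.ofReal (t ^ r) := by
                rw [hfs, ← Real.rpow_mul ht0.le]
                congr 2
                rw [hr_def]; field_simp
        rwa [indicator_of_mem (show t ∈ Ioc (0:ℝ) c from ⟨ht0, htc.le⟩)]
    calc ∫⁻ t in Ioi (0:ℝ), ν {a | t < f (A a) ^ (-q)}
        ≤ ∫⁻ t in Ioi (0:ℝ),
            (Ioc (0:ℝ) c).indicator (fun t => ENNReal.ofReal (t ^ r)) t :=
          lintegral_mono_ae hpt
      _ = ∫⁻ t in Ioc (0:ℝ) c, ENNReal.ofReal (t ^ r) := by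
          rw [lintegral_indicator measurableSet_Ioc,
            Measure.restrict_restrict measurableSet_Ioc,
            inter_eq_left.2 Ioc_subset_Ioi_self]
      _ = ENNReal.ofReal (∫ t in Ioc (0:ℝ) c, t ^ r) := by
          rw [← ofReal_integral_eq_lintegral_ofReal]
          · have h := (intervalIntegral.intervalIntegrable_rpow' (a := 0) (b := c) hr1).1
            exact h
          · filter_upwards [ae_restrict_mem measurableSet_Ioc] with t ht
            exact Real.rpow_nonneg ht.1.le _
      _ = ENNReal.ofReal (q / (q - p) * m ^ (p - q)) := by
          congr 1
          rw [← intervalIntegral.integral_of_le hc0.le, integral_rpow (Or.inl hr1)]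
          rw [Real.zero_rpow hr1'.ne']
          rw [hc_def, ← Real.rpow_mul hm.le]
          rw [show -q * (r + 1) = p - q by rw [hr_def]; field_simp; ring]
          rw [show r + 1 = (q - p) / q by rw [hr_def]; field_simp; ring]
          rw [sub_zero]
          field_simp
  -- conclude
  have hnn : 0 ≤ᵐ[μ] fun ω => f (A ω) ^ (-q) * X ω ^ p :=
    ae_of_all _ fun ω =>
      mul_nonneg (Real.rpow_nonneg (hfA_pos ω).le _) (Real.rpow_nonneg (hX_nonneg ω) _)
  rw [integral_eq_lintegral_of_nonneg_ae hnn
    ((hg_meas.mul (hX_meas.pow_const p)).aestronglyMeasurable)]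
  exact ENNReal.toReal_le_of_le_ofReal
    (mul_nonneg (div_nonneg hq0.le hqp.le) (Real.rpow_nonneg hm.le _)) key
end
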